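/- arXiv:0707.2472 — 3 statements merged into one kernel-verified Lean document; each statement's English description precedes it below -/
import Mathlib

section
/- Conversely, if the moment sequence of a positive measure μ on ℝ satisfies limsup_{n→∞} (s_{2n}/(2n)!)^{1/(2n)} < ∞, then there exists α > 0 such that ∫ e^{α|x|} dμ(x) < ∞. -/
open MeasureTheory Filter Real

private lemma aux_summable_even (t : ℝ) :
    Summable (fun k : ℕ => t ^ (2 * k) / (Nat.factorial (2 * k))) :=
  (Real.summable_pow_div_factorial t).comp_injective
    (by intro a b h; dsimp at h; omega : Function.Injective (fun k : ℕ => 2 * k))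

private lemma aux_cosh (t : ℝ) :
    Real.exp t + Real.exp (-t) = 2 * ∑' k : ℕ, t ^ (2 * k) / (Nat.factorial (2 * k)) := by
  have he : ∀ u : ℝ, Real.exp u = ∑' n : ℕ, u ^ n / n.factorial := by
    intro u
    rw [Real.exp_eq_exp_ℝ, NormedSpace.exp_eq_tsum_div]
  set f : ℕ → ℝ := fun n => t ^ n / n.factorial + (-t) ^ n / n.factorial with hf
  have hfe : Summable (fun k => f (2 * k)) :=
    ((Real.summable_pow_div_factorial t).comp_injective
      (by intro a b h; dsimp at h; omega : Function.Injective (fun k : ℕ => 2 * k))).add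
    ((Real.summable_pow_div_factorial (-t)).comp_injective
      (by intro a b h; dsimp at h; omega : Function.Injective (fun k : ℕ => 2 * k)))
  have hfo : Summable (fun k => f (2 * k + 1)) :=
    ((Real.summable_pow_div_factorial t).comp_injective
      (by intro a b h; dsimp at h; omega : Function.Injective (fun k : ℕ => 2 * k + 1))).add
    ((Real.summable_pow_div_factorial (-t)).comp_injective
      (by intro a b h; dsimp at h; omega : Function.Injective (fun k : ℕ => 2 * k + 1)))
  have key : (∑' k : ℕ, f (2 * k)) + ∑' k : ℕ, f (2 * k + 1) = ∑' n : ℕ, f n :=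
    tsum_even_add_odd hfe hfo
  have h1 : Real.exp t + Real.exp (-t) = ∑' n : ℕ, f n := by
    rw [he t, he (-t), hf, Summable.tsum_add (Real.summable_pow_div_factorial t)
      (Real.summable_pow_div_factorial (-t))]
  have h2 : ∀ k : ℕ, f (2 * k) = 2 * (t ^ (2 * k) / (Nat.factorial (2 * k))) := by
    intro k
    have : (-t) ^ (2 * k) = t ^ (2 * k) := (even_two_mul k).neg_pow t
    simp [hf, this]; ring
  have h3 : ∀ k : ℕ, f (2 * k + 1) = 0 := by
    intro k
    have : (-t) ^ (2 * k + 1) = -(t ^ (2 * k + 1)) := (odd_two_mul_add_one k).neg_pow t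
    simp [hf, this]; ring
  rw [h1, ← key]
  simp only [h2, h3, tsum_zero, add_zero]
  rw [tsum_mul_left]

private lemma aux_exp_abs_le (t : ℝ) :
    Real.exp |t| ≤ 2 * ∑' k : ℕ, t ^ (2 * k) / (Nat.factorial (2 * k)) := by
  have h := aux_cosh |t|
  have h2 : ∀ k : ℕ, |t| ^ (2 * k) = t ^ (2 * k) := fun k => (even_two_mul k).pow_abs t
  simp only [h2] at h
  have := (Real.exp_pos (-|t|)).le
  linarith

/-- Perron's criterion implies exponential integrability. -/
theorem perron_implies_exp_integrable (μ : Measure ℝ) (s : ℕ → ℝ)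
    (hint : ∀ n : ℕ, Integrable (fun x => x ^ n) μ)
    (hs : ∀ n : ℕ, s n = ∫ x, x ^ n ∂μ)
    (hPerron : Filter.limsup (fun n : ℕ =>
        (((s (2 * n) / (Nat.factorial (2 * n))) ^ ((2 * (n : ℝ))⁻¹) : ℝ) : EReal))
        atTop < ⊤) :
    ∃ α : ℝ, 0 < α ∧ Integrable (fun x => Real.exp (α * |x|)) μ := by
  have hs_nonneg : ∀ n : ℕ, 0 ≤ s (2 * n) := by
    intro n
    rw [hs]
    exact integral_nonneg fun x => (even_two_mul n).pow_nonneg x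
  -- extract a uniform bound from the limsup
  obtain ⟨c, hc, -⟩ := EReal.lt_iff_exists_real_btwn.mp hPerron
  have hev : ∀ᶠ n in atTop,
      ((s (2 * n) / (Nat.factorial (2 * n))) ^ ((2 * (n : ℝ))⁻¹) : ℝ) < c := by
    filter_upwards [Filter.eventually_lt_of_limsup_lt hc] with n hn
    exact_mod_cast hn
  obtain ⟨N, hN⟩ := Filter.eventually_atTop.mp hev
  set a : ℝ := max c 1 with ha
  have ha1 : (1 : ℝ) ≤ a := le_max_right c 1
  have ha0 : (0 : ℝ) < a := lt_of_lt_of_le one_pos ha1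
  set M : ℕ := max N 1 with hM
  have key : ∀ n : ℕ, M ≤ n →
      s (2 * n) / (Nat.factorial (2 * n)) ≤ a ^ (2 * n) := by
    intro n hn
    have hx : (0 : ℝ) ≤ s (2 * n) / (Nat.factorial (2 * n)) :=
      div_nonneg (hs_nonneg n) (Nat.cast_nonneg _)
    have h1 : ((s (2 * n) / (Nat.factorial (2 * n))) ^ ((2 * (n : ℝ))⁻¹) : ℝ) ≤ a :=
      le_trans (hN n (le_trans (le_max_left N 1) hn)).le (le_max_left c 1)
    have hn1 : (1 : ℕ) ≤ n := le_trans (le_max_right N 1) hn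
    have h2n : (2 * (n : ℝ)) ≠ 0 := by
      have : (0 : ℝ) < n := by exact_mod_cast Nat.lt_of_lt_of_le Nat.zero_lt_one hn1
      positivity
    calc s (2 * n) / (Nat.factorial (2 * n))
        = (((s (2 * n) / (Nat.factorial (2 * n))) ^ ((2 * (n : ℝ))⁻¹)) ^ (2 * n : ℕ)) := by
          rw [← Real.rpow_natCast (((s (2 * n) / (Nat.factorial (2 * n)))
            ^ ((2 * (n : ℝ))⁻¹)) : ℝ) (2 * n), ← Real.rpow_mul hx]
          push_cast
          rw [inv_mul_cancel₀ h2n, Real.rpow_one]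
      _ ≤ a ^ (2 * n) := pow_le_pow_left₀ (Real.rpow_nonneg hx _) h1 _
  -- choose α
  refine ⟨(2 * a)⁻¹, by positivity, ?_⟩
  set α : ℝ := (2 * a)⁻¹ with hα
  have hα0 : 0 < α := by positivity
  have hαa : α * a = 2⁻¹ := by
    rw [hα]
    field_simp
  -- the coefficient series is summable
  set b : ℕ → ℝ := fun k => 2 * (α ^ (2 * k) * (s (2 * k) / (Nat.factorial (2 * k)))) with hb
  have hb_nonneg : ∀ k, 0 ≤ b k := by
    intro k
    have := hs_nonneg k
    have : (0:ℝ) ≤ α ^ (2*k) := by positivity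
    positivity
  have hb_summable : Summable b := by
    rw [← summable_nat_add_iff M]
    have hgeo : Summable (fun k : ℕ => 2 * ((4 : ℝ)⁻¹) ^ k) :=
      (summable_geometric_of_lt_one (by norm_num) (by norm_num)).mul_left 2
    refine Summable.of_nonneg_of_le (fun k => hb_nonneg _) (fun k => ?_) hgeo
    have hk : M ≤ k + M := Nat.le_add_left M k
    have h1 : s (2 * (k + M)) / (Nat.factorial (2 * (k + M))) ≤ a ^ (2 * (k + M)) :=
      key _ hk
    have h2 : b (k + M) ≤ 2 * (α * a) ^ (2 * (k + M)) := by
      rw [hb]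
      have hαp : (0:ℝ) ≤ α ^ (2 * (k + M)) := by positivity
      have := mul_le_mul_of_nonneg_left h1 hαp
      rw [mul_pow]
      nlinarith
    refine h2.trans ?_
    rw [hαa]
    have h3 : ((2 : ℝ)⁻¹) ^ (2 * (k + M)) = ((4 : ℝ)⁻¹) ^ (k + M) := by
      rw [pow_mul]; norm_num
    rw [h3]
    have h4 : ((4 : ℝ)⁻¹ : ℝ) ^ (k + M) ≤ ((4 : ℝ)⁻¹) ^ k :=
      pow_le_pow_of_le_one (by norm_num) (by norm_num) (Nat.le_add_right k M)
    nlinarith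
  -- termwise functions
  set F : ℕ → ℝ → ℝ := fun k x => 2 * ((α * x) ^ (2 * k) / (Nat.factorial (2 * k))) with hF
  have hF_nonneg : ∀ k x, 0 ≤ F k x := by
    intro k x
    have h := (even_two_mul k).pow_nonneg (α * x)
    have h2 : (0:ℝ) ≤ (Nat.factorial (2*k) : ℝ) := Nat.cast_nonneg _
    positivity
  have hF_eq : ∀ k, F k = fun x => (2 * α ^ (2 * k) / (Nat.factorial (2 * k))) * x ^ (2 * k) := by
    intro k
    funext x
    rw [hF]
    simp only [mul_pow]
    ring
  have hF_int : ∀ k, Integrable (F k) μ := by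
    intro k
    rw [hF_eq k]
    exact (hint (2 * k)).const_mul _
  have hF_integral : ∀ k, ∫ x, F k x ∂μ = b k := by
    intro k
    rw [hF_eq k, integral_const_mul, ← hs, hb]
    ring
  have hF_meas : ∀ k, Measurable (F k) := by
    intro k
    rw [hF_eq k]
    exact (measurable_id.pow_const (2 * k)).const_mul _
  -- measurability of target
  constructor
  · exact (Real.continuous_exp.comp (continuous_const.mul continuous_abs)).aestronglyMeasurable
  -- finite integral
  rw [hasFiniteIntegral_iff_ofReal (ae_of_all _ fun x => (Real.exp_pos _).le)]
  have hpt : ∀ x : ℝ, ENNReal.ofReal (Real.exp (α * |x|)) ≤ ∑' k, ENNReal.ofReal (F k x) := by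
    intro x
    have h1 : Real.exp (α * |x|) ≤ ∑' k, F k x := by
      have habs : α * |x| = |α * x| := by
        rw [abs_mul, abs_of_pos hα0]
      rw [habs]
      have := aux_exp_abs_le (α * x)
      calc Real.exp |α * x| ≤ 2 * ∑' k : ℕ, (α * x) ^ (2 * k) / (Nat.factorial (2 * k)) := this
        _ = ∑' k, F k x := by
          rw [← tsum_mul_left]
    have h2 : ENNReal.ofReal (∑' k, F k x) = ∑' k, ENNReal.ofReal (F k x) :=
      ENNReal.ofReal_tsum_of_nonneg (hF_nonneg · x)
        ((aux_summable_even (α * x)).mul_left 2)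
    exact le_trans (ENNReal.ofReal_le_ofReal h1) (le_of_eq h2)
  calc ∫⁻ x, ENNReal.ofReal (Real.exp (α * |x|)) ∂μ
      ≤ ∫⁻ x, ∑' k, ENNReal.ofReal (F k x) ∂μ := lintegral_mono hpt
    _ = ∑' k, ∫⁻ x, ENNReal.ofReal (F k x) ∂μ :=
        lintegral_tsum fun k => ((hF_meas k).ennreal_ofReal).aemeasurable
    _ = ∑' k, ENNReal.ofReal (b k) := by
        congr 1
        funext k
        rw [← ofReal_integral_eq_lintegral_ofReal (hF_int k)
          (ae_of_all _ fun x => hF_nonneg k x), hF_integral k]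
    _ = ENNReal.ofReal (∑' k, b k) :=
        (ENNReal.ofReal_tsum_of_nonneg hb_nonneg hb_summable).symm
    _ < ⊤ := ENNReal.ofReal_lt_top
end

section
/- For 0 < q < 1, v > -1 and the measure dμ(x) = e(−x⁶; q⁶) x^{2v+1} d_q x on {q^n : n ∈ ℤ}, the even moments s_{2n} satisfy lim_{n→∞} q^{n/4} s_{2n}^{1/(2n)} = 0. -/
/-! Dropping all but the first `m` factors of `(-x⁶; q⁶)_∞` bounds the weight at `x = q^(-m)` by
`q^(3m(m+1))`; completing the square in `m` then bounds every term of the Jackson sum for `s_{2n}`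
by `q^(-(2n+2v)²/12) q^|k|`. Hence `s_{2n} ≤ (1+q) q^(-(n+v)²/3)`, and `q^(n/4) s_{2n}^(1/(2n))`
decays like `q^(n/12)`. -/

open Filter Real Topology

/-- Infinite q-Pochhammer symbol `(x; q)_∞ = ∏_{i≥0} (1 - q^i x)`. -/
noncomputable def qPochInf (x q : ℝ) : ℝ := ∏' i : ℕ, (1 - q ^ i * x)

lemma qPochInf_neg (c Q : ℝ) : qPochInf (-c) Q = ∏' i : ℕ, (1 + Q ^ i * c) := by
  simp only [qPochInf, mul_neg, sub_neg_eq_add]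

section
variable {Q c : ℝ}

lemma prod_range_le_qPochInf_neg (hQ0 : 0 ≤ Q) (hQ1 : Q < 1) (hc : 0 ≤ c) (m : ℕ) :
    ∏ i ∈ Finset.range m, (1 + Q ^ i * c) ≤ qPochInf (-c) Q := by
  have hfac : ∀ i : ℕ, 1 ≤ 1 + Q ^ i * c := fun i => le_add_of_nonneg_right (by positivity)
  have hmul : Multipliable fun i : ℕ => 1 + Q ^ i * c :=
    Real.multipliable_one_add_of_summable ((summable_geometric_of_lt_one hQ0 hQ1).mul_right c)
  rw [qPochInf_neg]
  refine ge_of_tendsto hmul.hasProd.tendsto_prod_nat ?_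
  filter_upwards [eventually_ge_atTop m] with N hN
  exact Finset.prod_le_prod_of_subset_of_one_le (Finset.range_subset_range.2 hN)
    (fun i _ => zero_le_one.trans (hfac i)) (fun i _ _ => hfac i)

lemma one_le_qPochInf_neg (hQ0 : 0 ≤ Q) (hQ1 : Q < 1) (hc : 0 ≤ c) : 1 ≤ qPochInf (-c) Q := by
  simpa using prod_range_le_qPochInf_neg hQ0 hQ1 hc 0

lemma pow_choose_two_mul_pow_le_qPochInf_neg (hQ0 : 0 ≤ Q) (hQ1 : Q < 1) (hc : 0 ≤ c) (m : ℕ) :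
    Q ^ m.choose 2 * c ^ m ≤ qPochInf (-c) Q :=
  calc Q ^ m.choose 2 * c ^ m = ∏ i ∈ Finset.range m, Q ^ i * c := by
        rw [Finset.prod_mul_distrib, Finset.prod_pow_eq_pow_sum, Finset.sum_range_id,
          ← Nat.choose_two_right, Finset.prod_const, Finset.card_range]
    _ ≤ ∏ i ∈ Finset.range m, (1 + Q ^ i * c) :=
        Finset.prod_le_prod (fun i _ => by positivity)
          (fun i _ => le_add_of_nonneg_left zero_le_one)
    _ ≤ qPochInf (-c) Q := prod_range_le_qPochInf_neg hQ0 hQ1 hc m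

end

lemma hasSum_pow_natAbs {r : ℝ} (h0 : 0 ≤ r) (h1 : r < 1) :
    HasSum (fun k : ℤ => r ^ k.natAbs) ((1 + r) / (1 - r)) := by
  have hgeo := hasSum_geometric_of_lt_one h0 h1
  have hneg : HasSum (fun n : ℕ => r ^ (-((n : ℤ) + 1)).natAbs) (r * (1 - r)⁻¹) := by
    refine (hgeo.mul_left r).congr_fun fun n => ?_
    rw [← pow_succ']
    congr 1
  convert HasSum.of_nat_of_neg_add_one (f := fun k : ℤ => r ^ k.natAbs) hgeo hneg using 1
  field_simp [(sub_pos.2 h1).ne']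

section
variable {x Q : ℝ} (M : ℝ)

lemma rpow_div_qPochInf_le_self (hx0 : 0 < x) (hx1 : x ≤ 1) (hQ0 : 0 ≤ Q) (hQ1 : Q < 1)
    (hM : 1 ≤ M) : x ^ M / qPochInf (-(x ^ 6)) Q ≤ x :=
  calc x ^ M / qPochInf (-(x ^ 6)) Q ≤ x ^ M :=
        div_le_self (rpow_nonneg hx0.le M) (one_le_qPochInf_neg hQ0 hQ1 (by positivity))
    _ ≤ x ^ (1 : ℝ) := rpow_le_rpow_of_exponent_ge hx0 hx1 hM
    _ = x := rpow_one x

lemma rpow_div_qPochInf_le_rpow_div (hx0 : 0 < x) (hQ0 : 0 < Q) (hQ1 : Q < 1) (m : ℕ) :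
    x ^ M / qPochInf (-(x ^ 6)) Q ≤ x ^ (M - 6 * m) / Q ^ m.choose 2 :=
  calc x ^ M / qPochInf (-(x ^ 6)) Q ≤ x ^ M / (Q ^ m.choose 2 * (x ^ 6) ^ m) :=
        div_le_div_of_nonneg_left (rpow_nonneg hx0.le M) (by positivity)
          (pow_choose_two_mul_pow_le_qPochInf_neg hQ0.le hQ1 (by positivity) m)
    _ = x ^ (M - 6 * m) / Q ^ m.choose 2 := by
        rw [rpow_sub hx0, ← pow_mul, ← rpow_natCast x (6 * m)]
        push_cast
        ring
end

section
variable {q : ℝ}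

lemma zpow_rpow_div_qPochInf_le (hq0 : 0 < q) (hq1 : q < 1) {M : ℝ} (hM : 1 ≤ M)
    (k : ℤ) : (q ^ k) ^ M / qPochInf (-((q ^ k) ^ 6)) (q ^ 6)
      ≤ q ^ (-((M - 2) ^ 2 / 12)) * q ^ k.natAbs := by
  have hQ0 : 0 < q ^ 6 := by positivity
  have hQ1 : q ^ 6 < 1 := pow_lt_one₀ hq0.le hq1 (by norm_num)
  obtain ⟨m, rfl | rfl⟩ := Int.eq_nat_or_neg k
  · have hE : 1 ≤ q ^ (-((M - 2) ^ 2 / 12)) :=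
      one_le_rpow_of_pos_of_le_one_of_nonpos hq0 hq1.le (by nlinarith)
    rw [zpow_natCast, Int.natAbs_natCast]
    calc _ ≤ q ^ m :=
          rpow_div_qPochInf_le_self M (by positivity) (pow_le_one₀ hq0.le hq1.le) hQ0.le hQ1 hM
      _ ≤ _ := le_mul_of_one_le_left (by positivity) hE
  · rw [Int.natAbs_neg, Int.natAbs_natCast]
    calc _ ≤ (q ^ (-(m : ℤ))) ^ (M - 6 * m) / (q ^ 6) ^ m.choose 2 :=
          rpow_div_qPochInf_le_rpow_div M (zpow_pos hq0 _) hQ0 hQ1 m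
      _ = q ^ (3 * m * (m + 1) - m * M : ℝ) := by
          rw [← rpow_intCast, ← rpow_mul hq0.le, ← pow_mul, ← rpow_natCast, ← rpow_sub hq0]
          push_cast [Nat.cast_choose_two]
          ring_nf
      _ ≤ q ^ (-((M - 2) ^ 2 / 12) + m) :=
          rpow_le_rpow_of_exponent_ge hq0 hq1.le
            (by nlinarith [sq_nonneg (6 * (m : ℝ) - (M - 2))])
      _ = _ := by rw [rpow_add hq0, rpow_natCast]

lemma zpow_rpow_div_qPochInf_nonneg (hq0 : 0 < q) (hq1 : q < 1) (M : ℝ) (k : ℤ) :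
    0 ≤ (q ^ k) ^ M / qPochInf (-((q ^ k) ^ 6)) (q ^ 6) :=
  div_nonneg (rpow_nonneg (zpow_pos hq0 k).le M) <| zero_le_one.trans <|
    one_le_qPochInf_neg (by positivity) (pow_lt_one₀ hq0.le hq1 (by norm_num)) (by positivity)

lemma tsum_zpow_rpow_div_qPochInf_le (hq0 : 0 < q) (hq1 : q < 1) {M : ℝ} (hM : 1 ≤ M) :
    (1 - q) * ∑' k : ℤ, (q ^ k) ^ M / qPochInf (-((q ^ k) ^ 6)) (q ^ 6)
      ≤ (1 + q) * q ^ (-((M - 2) ^ 2 / 12)) := by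
  have hmajor := (hasSum_pow_natAbs hq0.le hq1).mul_left (q ^ (-((M - 2) ^ 2 / 12)))
  have hterm_nonneg := zpow_rpow_div_qPochInf_nonneg hq0 hq1 M
  have hterm_le := zpow_rpow_div_qPochInf_le hq0 hq1 hM
  calc (1 - q) * ∑' k : ℤ, (q ^ k) ^ M / qPochInf (-((q ^ k) ^ 6)) (q ^ 6)
      ≤ (1 - q) * (q ^ (-((M - 2) ^ 2 / 12)) * ((1 + q) / (1 - q))) := by
        gcongr
        rw [← hmajor.tsum_eq]
        exact (Summable.of_nonneg_of_le hterm_nonneg hterm_le hmajor.summable).tsum_le_tsum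
          hterm_le hmajor.summable
    _ = (1 + q) * q ^ (-((M - 2) ^ 2 / 12)) := by
        field_simp [(sub_pos.2 hq1).ne']

lemma rpow_div_four_mul_rpow_inv_le (hq0 : 0 < q) (hq1 : q < 1) {C s n : ℝ} (v : ℝ)
    (hC : 1 ≤ C) (hn : 1 ≤ n) (hs0 : 0 ≤ s) (hs : s ≤ C * q ^ (-((2 * n + 2 * v) ^ 2 / 12))) :
    q ^ (n / 4) * s ^ (2 * n)⁻¹ ≤ C * q ^ (n / 12 - (v / 3 + v ^ 2 / 6)) := by
  have hinv : 0 ≤ (2 * n)⁻¹ := by positivity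
  have hexp : n / 4 + -((2 * n + 2 * v) ^ 2 / 12) * (2 * n)⁻¹
      = n / 12 - (v / 3 + v ^ 2 / (6 * n)) := by
    field_simp
    ring
  have hv : v ^ 2 / (6 * n) ≤ v ^ 2 / 6 := by
    gcongr
    linarith
  calc q ^ (n / 4) * s ^ (2 * n)⁻¹
      ≤ q ^ (n / 4) * (C * q ^ (-((2 * n + 2 * v) ^ 2 / 12))) ^ (2 * n)⁻¹ := by gcongr
    _ = C ^ (2 * n)⁻¹ * q ^ (n / 12 - (v / 3 + v ^ 2 / (6 * n))) := by
        rw [mul_rpow (by linarith) (by positivity), ← rpow_mul hq0.le, ← hexp, rpow_add hq0]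
        ring
    _ ≤ C * q ^ (n / 12 - (v / 3 + v ^ 2 / 6)) := by
        refine mul_le_mul ?_ (rpow_le_rpow_of_exponent_ge hq0 hq1.le (by linarith))
          (by positivity) (by linarith)
        calc C ^ (2 * n)⁻¹ ≤ C ^ (1 : ℝ) :=
              rpow_le_rpow_of_exponent_le hC (inv_le_one_of_one_le₀ (by linarith))
          _ = C := rpow_one C

end

theorem q_exponential_weight_moment_condition_general (q v : ℝ) (hq0 : 0 < q) (hq1 : q < 1)
    (s : ℕ → ℝ)
    (hs : ∀ m : ℕ, s m = (1 - q) * ∑' k : ℤ,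
      (q ^ (k : ℤ)) ^ ((m : ℝ) + 2 * v + 2) / qPochInf (-((q ^ (k : ℤ)) ^ (6 : ℕ))) (q ^ (6 : ℕ))) :
    Tendsto (fun n : ℕ => q ^ ((n : ℝ) / 4) * (s (2 * n)) ^ ((2 * (n : ℝ))⁻¹))
      atTop (𝓝 0) := by
  have hs0 : ∀ n, 0 ≤ s n := fun n => (hs n).symm ▸
    mul_nonneg (sub_pos.2 hq1).le (tsum_nonneg (zpow_rpow_div_qPochInf_nonneg hq0 hq1 _))
  have hlarge : ∀ᶠ n : ℕ in atTop, 1 ≤ (n : ℝ) ∧ -v ≤ n :=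
    (tendsto_natCast_atTop_atTop.eventually_ge_atTop 1).and
      (tendsto_natCast_atTop_atTop.eventually_ge_atTop (-v))
  have hlim : Tendsto (fun n : ℕ => (1 + q) * q ^ ((n : ℝ) / 12 - (v / 3 + v ^ 2 / 6)))
      atTop (𝓝 0) := by
    have h := (tendsto_rpow_atTop_of_base_lt_one q (by linarith) hq1).comp <|
      tendsto_atTop_add_const_right _ (-(v / 3 + v ^ 2 / 6)) <|
        tendsto_natCast_atTop_atTop.atTop_div_const (by norm_num : (0 : ℝ) < 12)
    simpa [sub_eq_add_neg] using h.const_mul (1 + q)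
  refine squeeze_zero' (Eventually.of_forall fun n => ?_) ?_ hlim
  · exact mul_nonneg (rpow_nonneg hq0.le _) (rpow_nonneg (hs0 _) _)
  · filter_upwards [hlarge] with n ⟨hn, hnv⟩
    have hMn : 1 ≤ ((2 * n : ℕ) : ℝ) + 2 * v + 2 := by
      push_cast
      linarith
    refine rpow_div_four_mul_rpow_inv_le hq0 hq1 v (by linarith) hn (hs0 _) ?_
    have := hs (2 * n) ▸ tsum_zpow_rpow_div_qPochInf_le hq0 hq1 hMn
    convert this using 4
    push_cast
    ring

/-- For `dμ(x) = e(−x⁶; q⁶) x^{2v+1} d_q x`, `lim q^{n/4} s_{2n}^{1/(2n)} = 0`. -/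
theorem q_exponential_weight_moment_condition (q v : ℝ) (hq0 : 0 < q) (hq1 : q < 1)
    (hv : -1 < v) (s : ℕ → ℝ)
    (hs : ∀ m : ℕ, s m = (1 - q) * ∑' k : ℤ,
      (q ^ (k : ℤ)) ^ ((m : ℝ) + 2 * v + 2) / qPochInf (-((q ^ (k : ℤ)) ^ (6 : ℕ))) (q ^ (6 : ℕ))) :
    Tendsto (fun n : ℕ => q ^ ((n : ℝ) / 4) * (s (2 * n)) ^ ((2 * (n : ℝ))⁻¹))
      atTop (𝓝 0) :=
  q_exponential_weight_moment_condition_general q v hq0 hq1 s hs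
end

section
/- For 0 < q < 1, v > -1 and dμ(x) = e(−x⁶; q⁶) x^{2v+1} d_q x, the Carleman series converges: ∑_{n=1}^∞ 1/s_{2n}^{1/(2n)} < ∞, i.e. μ fails Carleman's criterion (even though it is determinate). -/
/-!
Bound each moment below by a single term of its Jackson sum. The functional equation
`(x; Q)_∞ = (1 - x) (Qx; Q)_∞` gives
`q^{-3j(j+1)} ≤ (-q^{-6j}; q⁶)_∞ ≤ 2^j q^{-3j(j+1)} (-1; q⁶)_∞`;
the lower bound makes the Jackson sum converge, and by the upper bound the term at `x = q^{-j}`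
of `s_{2m}` is at least `q^{3j(j+1) - j(2m+2v+2)} / (2^j (-1; q⁶)_∞)`. With `j = ⌊m/3⌋` this
yields `s_{2m} ≥ (c q^{-m/6})^{2m}`, so `s_{2m}^{-1/(2m)} ≤ c⁻¹ q^{m/6}` is dominated by a
geometric series.
-/

open Filter Real Topology
theorem Real.one_le_tprod {ι : Type*} {f : ι → ℝ} (h : ∀ i, 1 ≤ f i) : 1 ≤ ∏' i, f i := by
  by_cases hf : Multipliable f
  · exact ge_of_tendsto' hf.hasProd fun s => Finset.one_le_prod fun i _ => h i
  · rw [tprod_eq_one_of_not_multipliable hf]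

theorem qPochInf_eq_one_sub_mul (x : ℝ) {q : ℝ} (hq : |q| < 1) :
    qPochInf x q = (1 - x) * qPochInf (q * x) q := by
  have hmul : Multipliable fun i : ℕ => 1 - q ^ i * (q * x) := by
    simpa only [sub_eq_add_neg] using
      Real.multipliable_one_add_of_summable ((summable_geometric_of_abs_lt_one hq).mul_right _).neg
  unfold qPochInf
  rw [tprod_eq_zero_mul' (by simpa only [pow_succ, mul_assoc] using hmul)]
  simp only [pow_zero, one_mul, pow_succ, mul_assoc]

theorem one_le_qPochInf_neg_s16 {x q : ℝ} (hx : 0 ≤ x) (hq : 0 ≤ q) : 1 ≤ qPochInf (-x) q :=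
  Real.one_le_tprod fun i => by
    rw [mul_neg, sub_neg_eq_add]; exact le_add_of_nonneg_right (by positivity)

section
variable {Q : ℝ}

theorem qPochInf_neg_inv_pow_succ (hQ0 : 0 < Q) (hQ1 : Q < 1) (j : ℕ) :
    qPochInf (-(Q ^ (j + 1))⁻¹) Q = (1 + (Q ^ (j + 1))⁻¹) * qPochInf (-(Q ^ j)⁻¹) Q := by
  rw [qPochInf_eq_one_sub_mul _ (by rwa [abs_of_pos hQ0]), sub_neg_eq_add, pow_succ, mul_inv,
    mul_neg, mul_left_comm, mul_inv_cancel₀ hQ0.ne', mul_one]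

theorem rpow_neg_triangle_succ (hQ0 : 0 < Q) (j : ℕ) :
    Q ^ (-(((j + 1 : ℕ) : ℝ) * ((j + 1 : ℕ) + 1) / 2)) =
      (Q ^ (j + 1))⁻¹ * Q ^ (-((j : ℝ) * (j + 1) / 2)) := by
  rw [← Real.rpow_natCast, ← Real.rpow_neg hQ0.le, ← Real.rpow_add hQ0]
  congr 1
  push_cast; ring

theorem rpow_le_qPochInf_neg_inv_pow (hQ0 : 0 < Q) (hQ1 : Q < 1) (j : ℕ) :
    Q ^ (-((j : ℝ) * (j + 1) / 2)) ≤ qPochInf (-(Q ^ j)⁻¹) Q := by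
  induction j with
  | zero => simpa using one_le_qPochInf_neg_s16 zero_le_one hQ0.le
  | succ j ih =>
    rw [rpow_neg_triangle_succ hQ0, qPochInf_neg_inv_pow_succ hQ0 hQ1]
    gcongr
    exact le_add_of_nonneg_left zero_le_one

theorem qPochInf_neg_inv_pow_le (hQ0 : 0 < Q) (hQ1 : Q < 1) (j : ℕ) :
    qPochInf (-(Q ^ j)⁻¹) Q ≤ 2 ^ j * Q ^ (-((j : ℝ) * (j + 1) / 2)) * qPochInf (-1) Q := by
  induction j with
  | zero => simp
  | succ j ih =>
    have hQj : 1 ≤ (Q ^ (j + 1))⁻¹ :=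
      (one_le_inv₀ (by positivity)).2 (pow_le_one₀ hQ0.le hQ1.le)
    rw [rpow_neg_triangle_succ hQ0, qPochInf_neg_inv_pow_succ hQ0 hQ1]
    calc (1 + (Q ^ (j + 1))⁻¹) * qPochInf (-(Q ^ j)⁻¹) Q
        ≤ (2 * (Q ^ (j + 1))⁻¹) * (2 ^ j * Q ^ (-((j : ℝ) * (j + 1) / 2)) * qPochInf (-1) Q) := by
          gcongr
          · linarith [one_le_qPochInf_neg_s16 (x := (Q ^ j)⁻¹) (by positivity) hQ0.le]
          · linarith
      _ = _ := by ring
end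

theorem summable_rpow_quadratic {q a : ℝ} (hq0 : 0 < q) (hq1 : q < 1) (ha : 0 < a) (b : ℝ) :
    Summable fun n : ℕ => q ^ (a * n ^ 2 + b * n) := by
  refine (summable_geometric_of_lt_one hq0.le hq1).of_norm_bounded_eventually_nat ?_
  filter_upwards [eventually_ge_atTop ⌈(1 - b) / a⌉₊] with n hn
  have hn' : (1 - b) / a ≤ n := Nat.ceil_le.1 hn
  rw [div_le_iff₀ ha] at hn'
  rw [Real.norm_of_nonneg (by positivity), ← Real.rpow_natCast q n]
  exact Real.rpow_le_rpow_of_exponent_ge hq0 hq1.le (by nlinarith [n.cast_nonneg (α := ℝ)])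

noncomputable def qMomentSummand (q M : ℝ) (k : ℤ) : ℝ :=
  (q ^ k) ^ M / qPochInf (-((q ^ k) ^ 6)) (q ^ 6)

/-- `s_m = ∫₀^∞ x^m e(−x⁶; q⁶) x^{2v+1} d_q x`, written out with the Jackson integral
`∫₀^∞ f d_q x = (1 - q) ∑_{k ∈ ℤ} q^k f(q^k)` and `e(x; q) = 1 / (x; q)_∞`. -/
noncomputable def qMoment (q v : ℝ) (m : ℕ) : ℝ :=
  (1 - q) * ∑' k : ℤ, qMomentSummand q (m + 2 * v + 2) k

section
variable {q : ℝ}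

theorem qMomentSummand_nonneg (hq : 0 < q) (M : ℝ) (k : ℤ) : 0 ≤ qMomentSummand q M k :=
  div_nonneg (by positivity)
    (zero_le_one.trans (one_le_qPochInf_neg_s16 (by positivity) (by positivity)))

theorem qMomentSummand_natCast_le (hq : 0 < q) (M : ℝ) (n : ℕ) :
    qMomentSummand q M n ≤ (q ^ M) ^ n := by
  rw [← Real.rpow_mul_natCast hq.le, mul_comm, Real.rpow_natCast_mul hq.le, ← zpow_natCast]
  exact div_le_self (by positivity) (one_le_qPochInf_neg_s16 (by positivity) (by positivity))

theorem qMomentSummand_neg_natCast (hq : 0 < q) (M : ℝ) (j : ℕ) :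
    qMomentSummand q M (-j) = q ^ (-(j * M)) / qPochInf (-((q ^ 6) ^ j)⁻¹) (q ^ 6) := by
  rw [qMomentSummand, ← Real.rpow_intCast, ← Real.rpow_mul hq.le, Real.rpow_intCast, zpow_neg,
    zpow_natCast, inv_pow, ← pow_mul, ← pow_mul, mul_comm j 6]
  push_cast
  ring_nf

theorem rpow_six_neg_triangle (hq : 0 < q) (j : ℕ) :
    (q ^ 6) ^ (-((j : ℝ) * (j + 1) / 2)) = q ^ (-(3 * j * (j + 1) : ℝ)) := by
  rw [← Real.rpow_natCast q 6, ← Real.rpow_mul hq.le]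
  congr 1
  push_cast; ring

theorem qMomentSummand_neg_natCast_le (hq0 : 0 < q) (hq1 : q < 1) (M : ℝ) (j : ℕ) :
    qMomentSummand q M (-j) ≤ q ^ (3 * j ^ 2 + (3 - M) * j) := by
  have hq6 : q ^ 6 < 1 := pow_lt_one₀ hq0.le hq1 (by norm_num)
  have hlow := rpow_le_qPochInf_neg_inv_pow (by positivity) hq6 j
  rw [rpow_six_neg_triangle hq0] at hlow
  rw [qMomentSummand_neg_natCast hq0]
  calc q ^ (-(j * M)) / qPochInf (-((q ^ 6) ^ j)⁻¹) (q ^ 6)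
      ≤ q ^ (-(j * M)) / q ^ (-(3 * j * (j + 1) : ℝ)) := by gcongr
    _ = q ^ (3 * j ^ 2 + (3 - M) * j) := by
      rw [← Real.rpow_sub hq0]; ring_nf

theorem le_qMomentSummand_neg_natCast (hq0 : 0 < q) (hq1 : q < 1) (M : ℝ) (j : ℕ) :
    q ^ (3 * j * (j + 1) - j * M) / (2 ^ j * qPochInf (-1) (q ^ 6)) ≤ qMomentSummand q M (-j) := by
  have hq6 : q ^ 6 < 1 := pow_lt_one₀ hq0.le hq1 (by norm_num)
  have hup := qPochInf_neg_inv_pow_le (by positivity) hq6 j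
  rw [rpow_six_neg_triangle hq0] at hup
  have hG : 0 < qPochInf (-((q ^ 6) ^ j)⁻¹) (q ^ 6) :=
    zero_lt_one.trans_le (one_le_qPochInf_neg_s16 (by positivity) (by positivity))
  have hC := one_le_qPochInf_neg_s16 zero_le_one (pow_nonneg hq0.le 6)
  rw [qMomentSummand_neg_natCast hq0, div_le_div_iff₀ (by positivity) hG]
  calc q ^ (3 * j * (j + 1) - j * M) * qPochInf (-((q ^ 6) ^ j)⁻¹) (q ^ 6)
      ≤ q ^ (3 * j * (j + 1) - j * M) *
          (2 ^ j * q ^ (-(3 * j * (j + 1) : ℝ)) * qPochInf (-1) (q ^ 6)) := by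
        gcongr
    _ = q ^ (-(j * M)) * (2 ^ j * qPochInf (-1) (q ^ 6)) := by
      rw [← sub_add_cancel (-(j * M)) (-(3 * j * (j + 1) : ℝ)), Real.rpow_add hq0]
      ring_nf

theorem summable_qMomentSummand (hq0 : 0 < q) (hq1 : q < 1) {M : ℝ} (hM : 0 < M) :
    Summable (qMomentSummand q M) := by
  refine Summable.of_nat_of_neg ?_ ?_
  · exact (summable_geometric_of_lt_one (by positivity) (Real.rpow_lt_one hq0.le hq1 hM))
      |>.of_nonneg_of_le (fun _ => qMomentSummand_nonneg hq0 M _) (qMomentSummand_natCast_le hq0 M)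
  · exact (summable_rpow_quadratic hq0 hq1 three_pos (3 - M)).of_nonneg_of_le
      (fun _ => qMomentSummand_nonneg hq0 M _) (qMomentSummand_neg_natCast_le hq0 hq1 M)
end

theorem exists_pow_le_qMoment {q v : ℝ} (hq0 : 0 < q) (hq1 : q < 1) (hv : -1 < v) :
    ∃ c > 0, ∀ m : ℕ, 1 ≤ m → (c * (q ^ (-(6 : ℝ)⁻¹)) ^ m) ^ (2 * m) ≤ qMoment q v (2 * m) := by
  set C := qPochInf (-1) (q ^ 6)
  have hC : 1 ≤ C := one_le_qPochInf_neg_s16 zero_le_one (pow_nonneg hq0.le 6)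
  set κ := (1 - q) / C * (q / 2)
  have hκ : 0 < κ := by
    have : 0 < 1 - q := by linarith
    positivity
  refine ⟨√κ, Real.sqrt_pos.2 hκ, fun m hm => ?_⟩
  -- `j ↦ j M - 3 j (j + 1)` is maximal near `j = m / 3`, where it is `m² / 3 + O(m)`.
  set j := m / 3
  set M : ℝ := (2 * m : ℕ) + 2 * v + 2
  have hM : 0 < M := by
    have : (0 : ℝ) ≤ (2 * m : ℕ) := Nat.cast_nonneg _
    linarith
  have hjm : j ≤ m := Nat.div_le_self m 3
  have hexp : 3 * j * (j + 1) - j * M ≤ m - (m : ℝ) ^ 2 / 3 := by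
    have h1 : 3 * (j : ℝ) ≤ m := by exact_mod_cast Nat.mul_div_le m 3
    have h2 : (m : ℝ) ≤ 3 * j + 2 := by exact_mod_cast (by omega : m ≤ 3 * j + 2)
    simp only [M]; push_cast
    nlinarith [mul_nonneg (sub_nonneg.2 h1) (by linarith : (0 : ℝ) ≤ 3 * j + 3 - m),
      mul_nonneg (j.cast_nonneg (α := ℝ)) (by linarith : (0 : ℝ) ≤ 2 * v + 2)]
  have h1q : 0 ≤ 1 - q := by linarith
  calc (√κ * (q ^ (-(6 : ℝ)⁻¹)) ^ m) ^ (2 * m)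
      = ((1 - q) / C) ^ m * (q / 2) ^ m * q ^ (-((m : ℝ) ^ 2 / 3)) := by
        rw [mul_pow, pow_mul √κ, Real.sq_sqrt hκ.le, ← pow_mul,
          ← Real.rpow_natCast (q ^ (-(6 : ℝ)⁻¹)), ← Real.rpow_mul hq0.le, mul_pow]
        push_cast; ring_nf
    _ ≤ (1 - q) / C * (q / 2) ^ m * q ^ (-((m : ℝ) ^ 2 / 3)) := by
        gcongr
        exact pow_le_of_le_one (by positivity) (div_le_one_of_le₀ (by linarith) (by linarith))
          (by omega)
    _ = (1 - q) * (q ^ (m - (m : ℝ) ^ 2 / 3) / (2 ^ m * C)) := by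
        rw [Real.rpow_sub hq0, Real.rpow_natCast, Real.rpow_neg hq0.le, div_pow]
        field_simp
    _ ≤ (1 - q) * (q ^ (3 * j * (j + 1) - j * M) / (2 ^ j * C)) := by
        refine mul_le_mul_of_nonneg_left ?_ h1q
        gcongr ?_ / (?_ * C)
        · exact Real.rpow_le_rpow_of_exponent_ge hq0 hq1.le hexp
        · exact pow_le_pow_right₀ one_le_two hjm
    _ ≤ (1 - q) * qMomentSummand q M (-j) :=
        mul_le_mul_of_nonneg_left (le_qMomentSummand_neg_natCast hq0 hq1 M j) h1q
    _ ≤ qMoment q v (2 * m) :=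
        mul_le_mul_of_nonneg_left ((summable_qMomentSummand hq0 hq1 hM).le_tsum _
          fun k _ => qMomentSummand_nonneg hq0 M k) h1q

theorem summable_inv_rpow_of_pow_le {s : ℕ → ℝ} {c ρ : ℝ} (hc : 0 < c) (hρ : 1 < ρ)
    (h : ∀ n : ℕ, (c * ρ ^ (n + 1)) ^ (2 * (n + 1)) ≤ s (2 * (n + 1))) :
    Summable fun n : ℕ => ((s (2 * (n + 1))) ^ ((2 * ((n : ℝ) + 1))⁻¹))⁻¹ := by
  have hbound : ∀ n : ℕ, 0 < ((s (2 * (n + 1))) ^ ((2 * ((n : ℝ) + 1))⁻¹))⁻¹ ∧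
      ((s (2 * (n + 1))) ^ ((2 * ((n : ℝ) + 1))⁻¹))⁻¹ ≤ c⁻¹ * ρ⁻¹ * ρ⁻¹ ^ n := by
    intro n
    have hb : 0 < c * ρ ^ (n + 1) := by positivity
    have hk : ((2 * (n + 1) : ℕ) : ℝ)⁻¹ = (2 * ((n : ℝ) + 1))⁻¹ := by push_cast; ring
    have hroot : c * ρ ^ (n + 1) ≤ (s (2 * (n + 1))) ^ ((2 * ((n : ℝ) + 1))⁻¹) := by
      rw [← hk]
      calc c * ρ ^ (n + 1) = ((c * ρ ^ (n + 1)) ^ (2 * (n + 1))) ^ ((2 * (n + 1) : ℕ) : ℝ)⁻¹ :=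
            (Real.pow_rpow_inv_natCast hb.le (by omega)).symm
        _ ≤ _ := Real.rpow_le_rpow (by positivity) (h n) (by positivity)
    refine ⟨inv_pos.2 (hb.trans_le hroot), (inv_anti₀ hb hroot).trans_eq ?_⟩
    rw [mul_inv, inv_pow, pow_succ']; ring
  exact ((summable_geometric_of_lt_one (by positivity) (inv_lt_one_of_one_lt₀ hρ)).mul_left _)
    |>.of_nonneg_of_le (fun n => (hbound n).1.le) (fun n => (hbound n).2)

/-- For `dμ(x) = e(−x⁶; q⁶) x^{2v+1} d_q x`, the Carleman series converges. -/
theorem q_exponential_weight_carleman_fails (q v : ℝ) (hq0 : 0 < q) (hq1 : q < 1)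
    (hv : -1 < v) (s : ℕ → ℝ)
    (hs : ∀ m : ℕ, s m = (1 - q) * ∑' k : ℤ,
      (q ^ (k : ℤ)) ^ ((m : ℝ) + 2 * v + 2) / qPochInf (-((q ^ (k : ℤ)) ^ (6 : ℕ))) (q ^ (6 : ℕ))) :
    Summable (fun n : ℕ => ((s (2 * (n + 1))) ^ ((2 * ((n : ℝ) + 1))⁻¹))⁻¹) := by
  obtain ⟨c, hc, hlow⟩ := exists_pow_le_qMoment hq0 hq1 hv
  refine summable_inv_rpow_of_pow_le hc
    (Real.one_lt_rpow_of_pos_of_lt_one_of_neg (z := -(6 : ℝ)⁻¹) hq0 hq1 (by norm_num)) fun n => ?_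
  rw [hs]
  exact hlow (n + 1) (by omega)
end
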